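/- Suppose Algorithm 1 is run on an on-line P_9-free bipartite graph G. Let v be a vertex with color index k and let i satisfy k ≥ 2i ≥ 2. If S_i(v) is complete in G, then the set S_i(v) contains an induced copy of X_i in G whose root is v. -/

import Mathlib

/-! ### P_n-free graphs -/

/-- `f` lists the vertices of an induced path on `n` vertices in `G`. -/
def IsInducedPath {V : Type*} (G : SimpleGraph V) (n : ℕ) (f : Fin n → V) : Prop :=
  Function.Injective f ∧
    ∀ a b : Fin n, G.Adj (f a) (f b) ↔ (a.val + 1 = b.val ∨ b.val + 1 = a.val)

/-- `G` contains no induced path on `n` vertices. -/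
def PFree {V : Type*} (G : SimpleGraph V) (n : ℕ) : Prop :=
  ¬ ∃ f : Fin n → V, IsInducedPath G n f

/-! ### The graphs `X_k` -/

/-- Vertex set of the graph `X_k` (with a junk value at `k = 0`). -/
def XV : ℕ → Type
  | 0 => PUnit
  | 1 => PUnit
  | 2 => Bool
  | (n+3) => Option (XV (n+2) ⊕ XV (n+2))

/-- The root of `X_k`. -/
def XRoot : (k : ℕ) → XV k
  | 0 => PUnit.unit
  | 1 => PUnit.unit
  | 2 => true
  | (_+3) => none

/-- The side of a vertex of `X_k`: `true` is the root side, `false` the non-root side. -/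
def XSide : (k : ℕ) → XV k → Bool
  | 0, _ => true
  | 1, _ => true
  | 2, v => v
  | (_+3), none => true
  | (n+3), some (Sum.inl x) => !(XSide (n+2) x)
  | (n+3), some (Sum.inr x) => XSide (n+2) x

/-- Base adjacency relation of `X_k`:  for `k ≥ 3`, `X_k` consists of two disjoint copies of
`X_{k-1}` with no edges in between, together with a root vertex joined to the root side of the
first copy and to the non-root side of the second copy. -/
def XRel : (k : ℕ) → XV k → XV k → Prop
  | 0, _, _ => False
  | 1, _, _ => False
  | 2, u, v => u ≠ v
  | (n+3), none, some (Sum.inl x) => XSide (n+2) x = true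
  | (n+3), none, some (Sum.inr x) => XSide (n+2) x = false
  | (n+3), some (Sum.inl x), none => XSide (n+2) x = true
  | (n+3), some (Sum.inr x), none => XSide (n+2) x = false
  | (n+3), some (Sum.inl x), some (Sum.inl y) => XRel (n+2) x y
  | (n+3), some (Sum.inr x), some (Sum.inr y) => XRel (n+2) x y
  | (_+3), _, _ => False

/-- The graph `X_k`. -/
def XGraph (k : ℕ) : SimpleGraph (XV k) := SimpleGraph.fromRel (XRel k)

/-! ### Algorithm 1 -/

/-- The three palettes of colors `a_i`, `b_i`, `c_i` used by Algorithm 1. -/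
inductive PalColor : Type
  | a : ℕ → PalColor
  | b : ℕ → PalColor
  | c : ℕ → PalColor
  deriving DecidableEq

/-- The index of a color. -/
def PalColor.index : PalColor → ℕ
  | a i => i
  | b i => i
  | c i => i

/-- A vertex `u` has color index `j` when its color is `a_j` or `b_j`. -/
def hasColorIndex (col : ℕ → PalColor) (u j : ℕ) : Prop :=
  col u = PalColor.a j ∨ col u = PalColor.b j

/-- Vertex set of `G_i[u]` at time `t` (vertices are presented in the order `0, 1, 2, …`):
the vertices presented before time `t` whose color has index between `1` and `i`,
together with `u`. -/
def domSet (col : ℕ → PalColor) (t i u : ℕ) : Set ℕ :=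
  {w | (w < t ∧ 1 ≤ (col w).index ∧ (col w).index ≤ i) ∨ w = u}

/-- `x` and `y` are connected within the subgraph of `G` induced on `S`. -/
def ReachIn (G : SimpleGraph ℕ) (S : Set ℕ) (x y : ℕ) : Prop :=
  ∃ (hx : x ∈ S) (hy : y ∈ S), (G.induce S).Reachable ⟨x, hx⟩ ⟨y, hy⟩

/-- `x` and `y` are joined by a walk of even length within the subgraph of `G` induced on `S`;
in a bipartite graph this says exactly that `x` and `y` are on the same side of their
(common) connected component. -/
def EvenReachIn (G : SimpleGraph ℕ) (S : Set ℕ) (x y : ℕ) : Prop :=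
  ∃ (hx : x ∈ S) (hy : y ∈ S) (p : (G.induce S).Walk ⟨x, hx⟩ ⟨y, hy⟩), Even p.length

/-- `C_i[u]` at time `t`: the connected component of `u` in the subgraph induced on
`domSet col t i u`. -/
def comp (G : SimpleGraph ℕ) (col : ℕ → PalColor) (t i u : ℕ) : Set ℕ :=
  {w | ReachIn G (domSet col t i u) u w}

/-- `C_i^y(u)` at time `t`: the connected component of `y` in `C_i(u) = C_i[u] \ {u}`. -/
def compMinus (G : SimpleGraph ℕ) (col : ℕ → PalColor) (t i u y : ℕ) : Set ℕ :=
  {w | ReachIn G (domSet col t i u \ {u}) y w}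

/-- Color `a_i` is mixed in `C_i[t]` at time `t`: vertices on both sides of `C_i[t]`
have color `a_i`. -/
def MixedA (G : SimpleGraph ℕ) (col : ℕ → PalColor) (t i : ℕ) : Prop :=
  ∃ x ∈ comp G col t i t, ∃ y ∈ comp G col t i t,
    col x = PalColor.a i ∧ col y = PalColor.a i ∧
    ¬ EvenReachIn G (domSet col t i t) x y

/-- `m = max {i ≥ 1 | a_i is mixed in C_i[t]} + 1` (with `max ∅ = 0`). -/
noncomputable def mIdx (G : SimpleGraph ℕ) (col : ℕ → PalColor) (t : ℕ) : ℕ :=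
  sSup {i | 1 ≤ i ∧ MixedA G col t i} + 1

/-- `u'` is universal to `C_{j-1}[u]` (at time `t`): `u'` is adjacent to all vertices in one of
the two sides of `C_{j-1}[u]`. -/
def UnivTo (G : SimpleGraph ℕ) (col : ℕ → PalColor) (t j u u' : ℕ) : Prop :=
  (∀ x ∈ comp G col t (j-1) u, EvenReachIn G (domSet col t (j-1) u) u x → G.Adj u' x) ∨
  (∀ x ∈ comp G col t (j-1) u, ¬ EvenReachIn G (domSet col t (j-1) u) u x → G.Adj u' x)

open Classical in
/-- One step of Algorithm 1: the color given to the vertex presented at time `t`, assuming that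
`col` records the colors of the previously presented vertices `0, …, t-1`. -/
noncomputable def step (G : SimpleGraph ℕ) (col : ℕ → PalColor) (t : ℕ) : PalColor :=
  let m := mIdx G col t
  let S := domSet col t m t
  let C := comp G col t m t
  let I1 : Set ℕ := {x ∈ C | EvenReachIn G S t x}
  let I2 : Set ℕ := {x ∈ C | ¬ EvenReachIn G S t x}
  if ∃ u ∈ I2, col u = PalColor.a m then PalColor.b m
  else if ∃ u ∈ I2, col u = PalColor.c m then PalColor.a m
  else if ∃ u ∈ I1 ∪ I2, ∃ u' ∈ I2, ∃ j : ℕ, hasColorIndex col u j ∧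
      ((m : ℝ) - Real.sqrt (2 * m) + 2 ≤ (j : ℝ)) ∧ UnivTo G col t j u u'
    then PalColor.c m
  else PalColor.a m

/-- The colors of the first `k` presented vertices under Algorithm 1 (junk elsewhere). -/
noncomputable def algoColAux (G : SimpleGraph ℕ) : ℕ → ℕ → PalColor
  | 0 => fun _ => PalColor.a 0
  | (k+1) => fun w => if w = k then step G (algoColAux G k) k else algoColAux G k w

/-- `algoCol G v` is the color that Algorithm 1 assigns to vertex `v` when the on-line graph `G`
is presented in the vertex order `0, 1, 2, …`. -/
noncomputable def algoCol (G : SimpleGraph ℕ) (v : ℕ) : PalColor :=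
  algoColAux G (v + 1) v

/-- The on-line graph on `ℕ` obtained by presenting the vertices of `G` in the order given by
the enumeration `π` (vertices `≥ n` are isolated). -/
def toNatGraph {V : Type*} (G : SimpleGraph V) {n : ℕ} (π : Fin n ≃ V) : SimpleGraph ℕ :=
  SimpleGraph.fromRel (fun i j => ∃ (hi : i < n) (hj : j < n), G.Adj (π ⟨i, hi⟩) (π ⟨j, hj⟩))

/-! ### Children, grandchildren and the sets `S_i(v)` -/

/-- There is no induced path on 5 vertices of `G` inside `S` with `v` as an endpoint. -/
def NoP5From (G : SimpleGraph ℕ) (S : Set ℕ) (v : ℕ) : Prop :=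
  ¬ ∃ f : Fin 5 → ℕ, (∀ l, f l ∈ S) ∧ IsInducedPath G 5 f ∧ (f 0 = v ∨ f 4 = v)

/-- `c` is a child of `v` (where `k` is the color index of `v`): `c` is an earliest presented
vertex of its side of `C_{k-1}(v)` colored `a_{k-1}`. -/
def IsChild (G : SimpleGraph ℕ) (side : ℕ → Bool) (v k c : ℕ) : Prop :=
  c ∈ comp G (algoCol G) v (k-1) v ∧ c ≠ v ∧ algoCol G c = PalColor.a (k-1) ∧
  ∀ c', c' ∈ comp G (algoCol G) v (k-1) v → algoCol G c' = PalColor.a (k-1) →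
    side c' = side c → c ≤ c'

/-- `(g1, g2)` is a valid pair of grandchildren for `v` (of color index `k ≥ 3`): they are the
children of a child `v'` of `v` for which the component `C_{k-1}^{v'}[v]` contains no induced
path on 5 vertices with endpoint `v`. -/
def IsGrandchildPair (G : SimpleGraph ℕ) (side : ℕ → Bool) (v k g1 g2 : ℕ) : Prop :=
  ∃ v', IsChild G side v k v' ∧
    NoP5From G (insert v (compMinus G (algoCol G) v (k-1) v v')) v ∧
    IsChild G side v' (k-1) g1 ∧ IsChild G side v' (k-1) g2 ∧ side g1 ≠ side g2

/-- `gc` is a valid choice of grandchildren: for each vertex `v` with color index `k ≥ 3` it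
fixes a valid pair of grandchildren of `v`. -/
def ValidGC (G : SimpleGraph ℕ) (side : ℕ → Bool) (gc : ℕ → ℕ × ℕ) : Prop :=
  ∀ v k, hasColorIndex (algoCol G) v k → 3 ≤ k →
    IsGrandchildPair G side v k (gc v).1 (gc v).2

/-- `Reaches gc i v w` is the relation `v →_i w`: there is a sequence `v = x_1, …, x_j = w`
with `j ≤ i` in which each `x_{ℓ+1}` is a grandchild of `x_ℓ`. -/
def Reaches (gc : ℕ → ℕ × ℕ) : ℕ → ℕ → ℕ → Prop
  | 0, _, _ => False
  | 1, v, w => v = w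
  | (i+2), v, w => Reaches gc (i+1) v w ∨
      ∃ u, Reaches gc (i+1) v u ∧ (w = (gc u).1 ∨ w = (gc u).2)

/-- `S_i(v) = {w | v →_i w}`. -/
def Sset (gc : ℕ → ℕ × ℕ) (i v : ℕ) : Set ℕ := {w | Reaches gc i v w}

/-- `S_i(v)` is complete in `G`: any `u, w ∈ S_i(v)` with `u →_i w` lying on opposite sides
of `G` are adjacent. -/
def SComplete (G : SimpleGraph ℕ) (side : ℕ → Bool) (gc : ℕ → ℕ × ℕ) (i v : ℕ) : Prop :=
  ∀ u w, u ∈ Sset gc i v → w ∈ Sset gc i v → Reaches gc i u w → side u ≠ side w → G.Adj u w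

/-!
Induction on `i`, remembering also that the root side of `X_i` goes to the side of `v`. For
`i ≥ 3` the two grandchildren of `v` lie on opposite sides and have color `a_{k-2}`, so by
induction each roots a copy of `X_{i-1}` inside its own `S_{i-1}`. Everything reachable below a
grandchild stays connected to it through vertices of color index at most `k - 2`, and two
`a_{k-2}`-vertices on opposite sides are never connected through such vertices; hence the two
copies are disjoint with no edges between them. Completeness of `S_i(v)` then supplies exactly
the edges from `v` to the copies that `X_i` prescribes.
-/

open SimpleGraph

section ReachIn

variable {G : SimpleGraph ℕ} {S T : Set ℕ} {x y z : ℕ}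

lemma ReachIn.mem_right (h : ReachIn G S x y) : y ∈ S := h.2.1

lemma ReachIn.refl (hx : x ∈ S) : ReachIn G S x x := ⟨hx, hx, .refl _⟩

lemma ReachIn.symm (h : ReachIn G S x y) : ReachIn G S y x :=
  let ⟨hx, hy, r⟩ := h; ⟨hy, hx, r.symm⟩

lemma ReachIn.trans (h : ReachIn G S x y) (h' : ReachIn G S y z) : ReachIn G S x z :=
  let ⟨hx, _, r⟩ := h; let ⟨_, hz, r'⟩ := h'; ⟨hx, hz, r.trans r'⟩

lemma ReachIn.mono (hST : S ⊆ T) (h : ReachIn G S x y) : ReachIn G T x y :=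
  let ⟨hx, hy, r⟩ := h; ⟨hST hx, hST hy, r.map (G.induceHomOfLE hST).toHom⟩

lemma ReachIn.of_adj (hx : x ∈ S) (hy : y ∈ S) (h : G.Adj x y) : ReachIn G S x y :=
  ⟨hx, hy, (show (G.induce S).Adj ⟨x, hx⟩ ⟨y, hy⟩ from h).reachable⟩

lemma reachIn_of_walk (p : G.Walk x y) (hp : ∀ w ∈ p.support, w ∈ S) : ReachIn G S x y :=
  ⟨_, _, ⟨p.induce S hp⟩⟩

lemma ReachIn.exists_walk (h : ReachIn G S x y) : ∃ p : G.Walk x y, ∀ w ∈ p.support, w ∈ S := by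
  obtain ⟨hx, hy, ⟨q⟩⟩ := h
  refine ⟨q.map (Embedding.induce S).toHom, fun w hw => ?_⟩
  erw [Walk.support_map, List.mem_map] at hw
  obtain ⟨w', -, rfl⟩ := hw
  exact w'.2

lemma EvenReachIn.side_eq {side : ℕ → Bool} (hside : ∀ x y, G.Adj x y → side x ≠ side y)
    (h : EvenReachIn G S x y) : side x = side y := by
  obtain ⟨hx, hy, p, hp⟩ := h
  let c : (G.induce S).Coloring Bool := Coloring.mk (fun w => side w) fun h => hside _ _ h
  exact Bool.eq_iff_iff.2 ((c.even_length_iff_congr p).1 hp)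

end ReachIn

section Algorithm

variable {G : SimpleGraph ℕ}

lemma algoCol_eq_step (x : ℕ) : algoCol G x = step G (algoColAux G x) x := by
  simp [algoCol, algoColAux]

lemma algoColAux_of_lt : ∀ {t w : ℕ}, w < t → algoColAux G t w = algoCol G w
  | t + 1, w, hw => by
    by_cases h : w = t
    · subst h; simp [algoColAux, algoCol_eq_step]
    · simp only [algoColAux, h, if_false]; exact algoColAux_of_lt (by omega)

lemma domSet_algoColAux (t i u : ℕ) : domSet (algoColAux G t) t i u = domSet (algoCol G) t i u := by
  ext w
  simp only [domSet, Set.mem_ofPred_eq]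
  constructor <;> rintro (⟨hw, h⟩ | rfl)
  all_goals first
    | exact Or.inr rfl
    | exact Or.inl ⟨hw, by simpa [algoColAux_of_lt hw] using h⟩

lemma comp_algoColAux (t i u : ℕ) : comp G (algoColAux G t) t i u = comp G (algoCol G) t i u := by
  simp only [comp, domSet_algoColAux]

lemma hasColorIndex.index_eq {col : ℕ → PalColor} {u j : ℕ} (h : hasColorIndex col u j) :
    (col u).index = j := by
  rcases h with h | h <;> rw [h] <;> rfl

lemma index_step (col : ℕ → PalColor) (t : ℕ) : (step G col t).index = mIdx G col t := by
  unfold step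
  dsimp only
  split_ifs <;> rfl

lemma lt_mIdx_of_mixedA {col : ℕ → PalColor} {t J : ℕ} (hJ : 1 ≤ J) (h : MixedA G col t J) :
    J < mIdx G col t := by
  have hbdd : BddAbove {i | 1 ≤ i ∧ MixedA G col t i} := by
    refine ⟨(Finset.range (t + 1)).sup fun w => (col w).index, ?_⟩
    rintro i ⟨-, x, hx, -, -, hcx, -, -⟩
    have hxt : x ∈ Finset.range (t + 1) := by
      rcases hx.mem_right with ⟨hxt, -⟩ | rfl <;> simp only [Finset.mem_range] <;> omega
    simpa [hcx, PalColor.index] using Finset.le_sup (f := fun w => (col w).index) hxt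
  exact Nat.lt_succ_of_le (le_csSup hbdd ⟨hJ, h⟩)

end Algorithm

section Separation

variable {G : SimpleGraph ℕ} {side : ℕ → Bool}

lemma lt_of_mem_comp {col : ℕ → PalColor} {t i u w : ℕ} (h : w ∈ comp G col t i u) (hw : w ≠ u) :
    w < t := by
  rcases ReachIn.mem_right h with ⟨h, -⟩ | h
  · exact h
  · exact absurd h hw

lemma algoCol_ne_a_of_opposite (hside : ∀ x y, G.Adj x y → side x ≠ side y) {x g J : ℕ}
    (hg : g ∈ comp G (algoCol G) x J x) (hgx : g ≠ x) (hcol : algoCol G g = .a J)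
    (hs : side g ≠ side x) : algoCol G x ≠ .a J := by
  intro hx
  rw [algoCol_eq_step] at hx
  have hm : mIdx G (algoColAux G x) x = J := by
    rw [← index_step, hx]; rfl
  have hI₂ : ∃ u ∈ {w ∈ comp G (algoColAux G x) x J x |
      ¬ EvenReachIn G (domSet (algoColAux G x) x J x) x w}, algoColAux G x u = .a J :=
    ⟨g, ⟨by rwa [comp_algoColAux], fun h => hs (h.side_eq hside).symm⟩,
      by rw [algoColAux_of_lt (lt_of_mem_comp hg hgx), hcol]⟩
  unfold step at hx
  dsimp only at hx
  rw [hm, if_pos hI₂] at hx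
  cases hx

lemma lt_index_of_mixed (hside : ∀ x y, G.Adj x y → side x ≠ side y) {x g₁ g₂ J : ℕ}
    (hJ : 1 ≤ J) (h₁ : g₁ ∈ comp G (algoCol G) x J x) (h₂ : g₂ ∈ comp G (algoCol G) x J x)
    (h₁x : g₁ ≠ x) (h₂x : g₂ ≠ x) (hc₁ : algoCol G g₁ = .a J) (hc₂ : algoCol G g₂ = .a J)
    (hs : side g₁ ≠ side g₂) : J < (algoCol G x).index := by
  have hmix : MixedA G (algoColAux G x) x J :=
    ⟨g₁, by rwa [comp_algoColAux], g₂, by rwa [comp_algoColAux],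
      by rw [algoColAux_of_lt (lt_of_mem_comp h₁ h₁x), hc₁],
      by rw [algoColAux_of_lt (lt_of_mem_comp h₂ h₂x), hc₂], fun h => hs (h.side_eq hside)⟩
  rw [algoCol_eq_step, index_step]
  exact lt_mIdx_of_mixedA hJ hmix

def lowIndexSet (G : SimpleGraph ℕ) (J : ℕ) : Set ℕ :=
  {w | 1 ≤ (algoCol G w).index ∧ (algoCol G w).index ≤ J}

/-- The last presented vertex `x` of a connecting walk would see both ends in `C_J[x]`: if `x` is
an end, Algorithm 1 colors it `b_J`; otherwise `a_J` is mixed and `x` gets index `> J`. -/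
theorem not_reachIn_lowIndexSet_of_opposite (hside : ∀ x y, G.Adj x y → side x ≠ side y)
    {g₁ g₂ J : ℕ} (hJ : 1 ≤ J) (hc₁ : algoCol G g₁ = .a J) (hc₂ : algoCol G g₂ = .a J)
    (hs : side g₁ ≠ side g₂) : ¬ ReachIn G (lowIndexSet G J) g₁ g₂ := by
  classical
  intro h
  obtain ⟨p, hp⟩ := h.exists_walk
  obtain ⟨x, hx, hmax⟩ := p.support.toFinset.exists_max_image id ⟨g₁, by simp⟩
  simp only [List.mem_toFinset, id] at hx hmax
  have hdom : ∀ w ∈ p.support, w ∈ domSet (algoCol G) x J x := fun w hw =>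
    (hmax w hw).lt_or_eq.imp (fun hlt => ⟨hlt, hp w hw⟩) id
  have h₁ : g₁ ∈ comp G (algoCol G) x J x :=
    reachIn_of_walk (p.takeUntil x hx).reverse fun w hw =>
      hdom w (p.support_takeUntil_subset_support hx (by simpa using hw))
  have h₂ : g₂ ∈ comp G (algoCol G) x J x :=
    reachIn_of_walk (p.dropUntil x hx) fun w hw => hdom w (p.support_dropUntil_subset_support hx hw)
  have hne : g₁ ≠ g₂ := fun h => hs (h ▸ rfl)
  by_cases hx₁ : g₁ = x
  · subst hx₁
    exact algoCol_ne_a_of_opposite hside h₂ hne.symm hc₂ hs.symm hc₁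
  by_cases hx₂ : g₂ = x
  · subst hx₂
    exact algoCol_ne_a_of_opposite hside h₁ hne hc₁ hs hc₂
  exact (lt_index_of_mixed hside hJ h₁ h₂ hx₁ hx₂ hc₁ hc₂ hs).not_ge (hp x hx).2

end Separation

section Grandchildren

variable {G : SimpleGraph ℕ} {side : ℕ → Bool} {gc : ℕ → ℕ × ℕ}

lemma comp_subset_comp {col : ℕ → PalColor} {u z I J : ℕ} (hz : z ∈ comp G col u I u)
    (hJ : J ≤ I) : comp G col z J z ⊆ comp G col u I u := by
  have hzu : z ≤ u := by rcases ReachIn.mem_right hz with ⟨h, -⟩ | h <;> omega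
  have hsub : domSet col z J z ⊆ domSet col u I u := by
    rintro w (⟨hw, h₁, h₂⟩ | rfl)
    · exact Or.inl ⟨by omega, h₁, h₂.trans hJ⟩
    · exact ReachIn.mem_right hz
  exact fun w hw => ReachIn.trans hz (ReachIn.mono hsub hw)

lemma ValidGC.side_ne (hgc : ValidGC G side gc) {z K : ℕ} (hz : hasColorIndex (algoCol G) z K)
    (hK : 3 ≤ K) : side (gc z).1 ≠ side (gc z).2 := by
  obtain ⟨-, -, -, -, -, h⟩ := hgc z K hz hK
  exact h

lemma ValidGC.grandchild (hgc : ValidGC G side gc) {z K g : ℕ}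
    (hz : hasColorIndex (algoCol G) z K) (hK : 3 ≤ K) (hg : g = (gc z).1 ∨ g = (gc z).2) :
    g ∈ comp G (algoCol G) z (K - 1) z ∧ algoCol G g = .a (K - 2) := by
  obtain ⟨v', ⟨hv', -⟩, -, h₁, h₂, -⟩ := hgc z K hz hK
  obtain ⟨hg, -, hcol, -⟩ : IsChild G side v' (K - 1) g := by
    rcases hg with rfl | rfl <;> assumption
  rw [Nat.sub_sub] at hg hcol
  exact ⟨comp_subset_comp hv' (by omega) hg, hcol⟩

lemma Reaches.succ : ∀ {j u w : ℕ}, Reaches gc j u w → Reaches gc (j + 1) u w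
  | 0, _, _, h => h.elim
  | 1, _, _, h => Or.inl h
  | _ + 2, _, _, h => Or.inl h

lemma reaches_self : ∀ {j : ℕ}, 1 ≤ j → ∀ v, Reaches gc j v v
  | 1, _, _ => rfl
  | _ + 2, _, v => (reaches_self (by omega) v).succ

lemma Reaches.of_grandchild : ∀ {j v g w : ℕ}, (g = (gc v).1 ∨ g = (gc v).2) →
    Reaches gc j g w → Reaches gc (j + 1) v w
  | 0, _, _, _, _, h => h.elim
  | 1, v, _, _, hg, h => Or.inr ⟨v, rfl, (show _ = _ from h) ▸ hg⟩
  | _ + 2, _, _, _, hg, Or.inl h => (Reaches.of_grandchild hg h).succ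
  | _ + 2, _, _, _, hg, Or.inr ⟨z, hz, hw⟩ => Or.inr ⟨z, Reaches.of_grandchild hg hz, hw⟩

theorem mem_comp_of_reaches (hgc : ValidGC G side gc) : ∀ {d u K w : ℕ},
    hasColorIndex (algoCol G) u K → 2 * d + 1 ≤ K → Reaches gc (d + 1) u w →
    w ∈ comp G (algoCol G) u (K - 1) u ∧ ∃ d' ≤ d, hasColorIndex (algoCol G) w (K - 2 * d')
  | 0, _, _, _, hu, _, h => (show _ = _ from h) ▸ ⟨ReachIn.refl (Or.inr rfl), 0, le_rfl, hu⟩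
  | _ + 1, _, _, _, hu, hK, Or.inl h =>
    let ⟨hw, d', hd', hc⟩ := mem_comp_of_reaches hgc hu (by omega) h
    ⟨hw, d', by omega, hc⟩
  | _ + 1, _, K, _, hu, hK, Or.inr ⟨z, hz, hw⟩ => by
    obtain ⟨hzu, d', hd', hzc⟩ := mem_comp_of_reaches hgc hu (by omega) hz
    obtain ⟨hwz, hwc⟩ := hgc.grandchild hzc (by omega) hw
    refine ⟨comp_subset_comp hzu (by omega) hwz, d' + 1, by omega, Or.inl ?_⟩
    rw [hwc, show K - 2 * d' - 2 = K - 2 * (d' + 1) by omega]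

lemma reachIn_lowIndexSet_of_reaches (hgc : ValidGC G side gc) {g w J d : ℕ}
    (hg : algoCol G g = .a J) (hd : 2 * d + 1 ≤ J) (h : Reaches gc (d + 1) g w) :
    ReachIn G (lowIndexSet G J) g w := by
  refine ReachIn.mono ?_ (mem_comp_of_reaches hgc (Or.inl hg) hd h).1
  rintro y (⟨-, h₁, h₂⟩ | rfl)
  · exact ⟨h₁, by omega⟩
  · simp only [lowIndexSet, Set.mem_ofPred_eq, hg, PalColor.index]
    omega

theorem reaches_separated (hside : ∀ x y, G.Adj x y → side x ≠ side y)
    (hgc : ValidGC G side gc) {g₁ g₂ w₁ w₂ J d : ℕ} (hc₁ : algoCol G g₁ = .a J)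
    (hc₂ : algoCol G g₂ = .a J) (hs : side g₁ ≠ side g₂) (hd : 2 * d + 1 ≤ J)
    (h₁ : Reaches gc (d + 1) g₁ w₁) (h₂ : Reaches gc (d + 1) g₂ w₂) :
    w₁ ≠ w₂ ∧ ¬ G.Adj w₁ w₂ := by
  have r₁ := reachIn_lowIndexSet_of_reaches hgc hc₁ hd h₁
  have r₂ := reachIn_lowIndexSet_of_reaches hgc hc₂ hd h₂
  have hsep := not_reachIn_lowIndexSet_of_opposite hside (by omega) hc₁ hc₂ hs
  exact ⟨fun h => hsep (r₁.trans (h ▸ r₂.symm)),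
    fun h => hsep (r₁.trans ((ReachIn.of_adj r₁.mem_right r₂.mem_right h).trans r₂.symm))⟩

lemma SComplete.of_grandchild {i v g : ℕ} (h : SComplete G side gc (i + 1) v)
    (hg : g = (gc v).1 ∨ g = (gc v).2) : SComplete G side gc i g :=
  fun u w hu hw huw hs => h u w (.of_grandchild hg hu) (.of_grandchild hg hw) huw.succ hs

lemma SComplete.adj_iff (hside : ∀ x y, G.Adj x y → side x ≠ side y) {i v w : ℕ}
    (h : SComplete G side gc i v) (hi : 1 ≤ i) (hw : Reaches gc i v w) :
    G.Adj v w ↔ side v ≠ side w :=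
  ⟨hside v w, h v w (reaches_self hi v) hw hw⟩

end Grandchildren

section XGraph

lemma XRel_symm : ∀ (k : ℕ) (x y : XV k), XRel k x y → XRel k y x
  | 2, _, _, h => Ne.symm h
  | _ + 3, none, some (.inl _), h => h
  | _ + 3, none, some (.inr _), h => h
  | _ + 3, some (.inl _), none, h => h
  | _ + 3, some (.inr _), none, h => h
  | n + 3, some (.inl x), some (.inl y), h => XRel_symm (n + 2) x y h
  | n + 3, some (.inr x), some (.inr y), h => XRel_symm (n + 2) x y h

lemma XRel_irrefl : ∀ (k : ℕ) (x : XV k), ¬ XRel k x x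
  | 2, _, h => h rfl
  | n + 3, some (.inl x), h => XRel_irrefl (n + 2) x h
  | n + 3, some (.inr x), h => XRel_irrefl (n + 2) x h

lemma XGraph_adj {k : ℕ} {x y : XV k} : (XGraph k).Adj x y ↔ XRel k x y := by
  rw [XGraph, fromRel_adj]
  exact ⟨fun ⟨_, h⟩ => h.elim id (XRel_symm k y x),
    fun h => ⟨fun hxy => XRel_irrefl k x (hxy ▸ h), .inl h⟩⟩

variable {V : Type*} {G : SimpleGraph V} {n : ℕ}

def XGraph.glue (v : V) (eA eB : XGraph (n + 2) ↪g G)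
    (hvA : ∀ y, eA y ≠ v) (hvB : ∀ z, eB z ≠ v) (hAB : ∀ y z, eA y ≠ eB z)
    (hAB' : ∀ y z, ¬ G.Adj (eA y) (eB z))
    (hvA' : ∀ y, G.Adj v (eA y) ↔ XSide (n + 2) y = true)
    (hvB' : ∀ z, G.Adj v (eB z) ↔ XSide (n + 2) z = false) : XGraph (n + 3) ↪g G where
  toFun
    | none => v
    | some (.inl y) => eA y
    | some (.inr z) => eB z
  inj' := by
    rintro (_ | y | y) (_ | z | z) h
    · rfl
    · exact absurd h.symm (hvA z)
    · exact absurd h.symm (hvB z)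
    · exact absurd h (hvA y)
    · exact congrArg _ (congrArg Sum.inl (eA.injective h))
    · exact absurd h (hAB y z)
    · exact absurd h (hvB y)
    · exact absurd h.symm (hAB z y)
    · exact congrArg _ (congrArg Sum.inr (eB.injective h))
  map_rel_iff' := by
    rintro (_ | y | y) (_ | z | z) <;> refine Iff.trans ?_ XGraph_adj.symm
    · exact iff_of_false (G.loopless.irrefl v) (XRel_irrefl _ _)
    · exact hvA' z
    · exact hvB' z
    · exact (G.adj_comm _ _).trans (hvA' y)
    · exact eA.map_rel_iff.trans XGraph_adj
    · exact iff_of_false (hAB' y z) id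
    · exact (G.adj_comm _ _).trans (hvB' y)
    · exact iff_of_false (fun h => hAB' z y h.symm) id
    · exact eB.map_rel_iff.trans XGraph_adj

end XGraph

section Embedding

variable {G : SimpleGraph ℕ} {side : ℕ → Bool} {gc : ℕ → ℕ × ℕ}

lemma ValidGC.exists_grandchildren (hgc : ValidGC G side gc) {z K : ℕ}
    (hz : hasColorIndex (algoCol G) z K) (hK : 3 ≤ K) (s : Bool) :
    ∃ gA gB, (gA = (gc z).1 ∨ gA = (gc z).2) ∧ (gB = (gc z).1 ∨ gB = (gc z).2) ∧
      side gA = !s ∧ side gB = s := by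
  have hne := hgc.side_ne hz hK
  by_cases h : side (gc z).1 = s
  · exact ⟨_, _, .inr rfl, .inl rfl, h ▸ Bool.eq_not_iff.2 hne.symm, h⟩
  · have h₁ : side (gc z).1 = !s := Bool.eq_not_iff.2 h
    have h₂ : side (gc z).2 ≠ !s := h₁ ▸ hne.symm
    exact ⟨_, _, .inl rfl, .inr rfl, h₁, by simpa using Bool.eq_not_iff.2 h₂⟩

def HasSidedXEmbedding (G : SimpleGraph ℕ) (side : ℕ → Bool) (gc : ℕ → ℕ × ℕ) (i v : ℕ) :
    Prop :=
  ∃ e : XGraph i ↪g G, (∀ x, e x ∈ Sset gc i v) ∧ e (XRoot i) = v ∧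
    ∀ x, (side (e x) = side v ↔ XSide i x = true)

lemma hasSidedXEmbedding_one (v : ℕ) : HasSidedXEmbedding G side gc 1 v :=
  ⟨⟨⟨fun _ => v, fun _ _ _ => rfl⟩, iff_of_false (G.loopless.irrefl v) XGraph_adj.1⟩,
    fun _ => (rfl : v = v), rfl, fun _ => iff_of_true rfl rfl⟩

lemma hasSidedXEmbedding_two (hside : ∀ x y, G.Adj x y → side x ≠ side y)
    (hgc : ValidGC G side gc) {v k : ℕ} (hvk : hasColorIndex (algoCol G) v k) (hk : 3 ≤ k)
    (hcomp : SComplete G side gc 2 v) : HasSidedXEmbedding G side gc 2 v := by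
  obtain ⟨g, -, hg, -, hs, -⟩ := hgc.exists_grandchildren hvk hk (side v)
  have hreach : Reaches gc 2 v g := .of_grandchild hg rfl
  have hadj : G.Adj v g := (hcomp.adj_iff hside (by norm_num) hreach).2 (by simp [hs])
  refine ⟨⟨⟨fun b => bif b then v else g, ?_⟩, ?_⟩, ?_, rfl, ?_⟩
  · rintro (_ | _) (_ | _) h
    all_goals first | rfl | exact absurd h hadj.ne' | exact absurd h hadj.ne
  · rintro (_ | _) (_ | _) <;> refine Iff.trans ?_ XGraph_adj.symm
    · exact iff_of_false (G.loopless.irrefl g) (XRel_irrefl 2 _)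
    · exact iff_of_true hadj.symm Bool.false_ne_true
    · exact iff_of_true hadj Bool.false_ne_true.symm
    · exact iff_of_false (G.loopless.irrefl v) (XRel_irrefl 2 _)
  · rintro (_ | _)
    · exact hreach
    · exact reaches_self (by norm_num) v
  · rintro (_ | _)
    · show side g = side v ↔ false = true
      simp [hs]
    · exact iff_of_true rfl rfl

theorem hasSidedXEmbedding_succ (hside : ∀ x y, G.Adj x y → side x ≠ side y)
    (hgc : ValidGC G side gc) {n v k : ℕ} (hvk : hasColorIndex (algoCol G) v k)
    (hk : 2 * (n + 3) ≤ k) (hcomp : SComplete G side gc (n + 3) v)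
    (ih : ∀ g, algoCol G g = .a (k - 2) → SComplete G side gc (n + 2) g →
      HasSidedXEmbedding G side gc (n + 2) g) :
    HasSidedXEmbedding G side gc (n + 3) v := by
  obtain ⟨gA, gB, hgA, hgB, hsA, hsB⟩ := hgc.exists_grandchildren hvk (by omega) (side v)
  have hcA := (hgc.grandchild hvk (by omega) hgA).2
  have hcB := (hgc.grandchild hvk (by omega) hgB).2
  obtain ⟨eA, hmemA, -, hsideA⟩ := ih gA hcA (hcomp.of_grandchild hgA)
  obtain ⟨eB, hmemB, -, hsideB⟩ := ih gB hcB (hcomp.of_grandchild hgB)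
  have hsep (y z) : eA y ≠ eB z ∧ ¬ G.Adj (eA y) (eB z) :=
    reaches_separated hside hgc hcA hcB (by simp [hsA, hsB]) (by omega) (hmemA y) (hmemB z)
  have hne_v {g w} (hg : algoCol G g = .a (k - 2)) (hw : Reaches gc (n + 2) g w) : w ≠ v := by
    rintro rfl
    have := (reachIn_lowIndexSet_of_reaches hgc hg (by omega) hw).mem_right.2
    rw [hvk.index_eq] at this
    omega
  have hreachA (y) : Reaches gc (n + 3) v (eA y) := .of_grandchild hgA (hmemA y)
  have hreachB (z) : Reaches gc (n + 3) v (eB z) := .of_grandchild hgB (hmemB z)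
  have hadjA (y) : G.Adj v (eA y) ↔ XSide (n + 2) y = true := by
    rw [hcomp.adj_iff hside (by omega) (hreachA y), ← hsideA y, hsA, Bool.eq_not_iff, ne_comm]
  have hadjB (z) : G.Adj v (eB z) ↔ XSide (n + 2) z = false := by
    rw [hcomp.adj_iff hside (by omega) (hreachB z), ← Bool.not_eq_true, ← hsideB z, hsB, ne_comm]
  refine ⟨XGraph.glue v eA eB (fun y => hne_v hcA (hmemA y)) (fun z => hne_v hcB (hmemB z))
    (fun y z => (hsep y z).1) (fun y z => (hsep y z).2) hadjA hadjB, ?_, rfl, ?_⟩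
  · rintro (_ | y | z)
    · exact reaches_self (by omega) v
    · exact hreachA y
    · exact hreachB z
  · rintro (_ | y | z)
    · exact iff_of_true rfl rfl
    · show side (eA y) = side v ↔ (!XSide (n + 2) y) = true
      rw [Bool.not_eq_true', ← Bool.not_eq_true, ← hsideA y, hsA, Bool.eq_not_iff, not_not]
    · show side (eB z) = side v ↔ XSide (n + 2) z = true
      rw [← hsideB z, hsB]

theorem hasSidedXEmbedding (hside : ∀ x y, G.Adj x y → side x ≠ side y)
    (hgc : ValidGC G side gc) : ∀ {i v k : ℕ}, 1 ≤ i → hasColorIndex (algoCol G) v k →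
      2 * i ≤ k → SComplete G side gc i v → HasSidedXEmbedding G side gc i v
  | 1, v, _, _, _, _, _ => hasSidedXEmbedding_one v
  | 2, _, _, _, hvk, hk, hcomp => hasSidedXEmbedding_two hside hgc hvk (by omega) hcomp
  | _ + 3, _, _, _, hvk, hk, hcomp => hasSidedXEmbedding_succ hside hgc hvk hk hcomp
      fun _ hg hg' => hasSidedXEmbedding hside hgc (by omega) (Or.inl hg) (by omega) hg'

end Embedding

theorem stmt8_general (G : SimpleGraph ℕ)
    (side : ℕ → Bool) (hside : ∀ x y, G.Adj x y → side x ≠ side y)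
    (gc : ℕ → ℕ × ℕ) (hgc : ValidGC G side gc)
    (v k i : ℕ) (hvk : hasColorIndex (algoCol G) v k)
    (h1 : 2 ≤ 2 * i) (h2 : 2 * i ≤ k)
    (hcomp : SComplete G side gc i v) :
    ∃ e : XGraph i ↪g G, (∀ x, e x ∈ Sset gc i v) ∧ e (XRoot i) = v := by
  obtain ⟨e, hmem, hroot, -⟩ := hasSidedXEmbedding hside hgc (by omega) hvk h2 hcomp
  exact ⟨e, hmem, hroot⟩

theorem stmt8 (G : SimpleGraph ℕ) (n : ℕ) (hfin : ∀ i j, G.Adj i j → i < n ∧ j < n)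
    (hP9 : PFree G 9)
    (side : ℕ → Bool) (hside : ∀ x y, G.Adj x y → side x ≠ side y)
    (gc : ℕ → ℕ × ℕ) (hgc : ValidGC G side gc)
    (v k i : ℕ) (hvk : hasColorIndex (algoCol G) v k)
    (h1 : 2 ≤ 2 * i) (h2 : 2 * i ≤ k)
    (hcomp : SComplete G side gc i v) :
    ∃ e : XGraph i ↪g G, (∀ x, e x ∈ Sset gc i v) ∧ e (XRoot i) = v :=
  stmt8_general G side hside gc hgc v k i hvk h1 h2 hcomp
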